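/- arXiv:2312.15938 — 7 statements merged into one kernel-verified Lean document; each statement's English description precedes it below -/
import Mathlib

section
/- Let X be a symmetric real n×n matrix solving the ARE. Let z : [0, ∞) → ℝⁿ be differentiable and v : [0, ∞) → ℝᵐ be continuous with ż(t) = Az(t) + Bv(t) for all t ≥ 0 and z(t) → 0 as t → ∞, and suppose that both t ↦ ‖z(t)‖²_Q + ‖v(t)‖²_R and t ↦ ‖v(t) + R⁻¹BᵀX z(t)‖²_R are integrable on [0, ∞). Then ½∫₀^∞ (‖z(t)‖²_Q + ‖v(t)‖²_R) dt = ½⟨X z(0), z(0)⟩ + ½∫₀^∞ ‖v(t) + R⁻¹BᵀX z(t)‖²_R dt. -/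
/-!
With `V(z) = ⟨X z, z⟩`, the Riccati equation is exactly what is needed to complete the square:
along any trajectory of `ż = A z + B v`,
`d/dt V(z) = ‖v + R⁻¹BᵀX z‖²_R - (‖z‖²_Q + ‖v‖²_R)`.
Integrating over `(0, ∞)` and using `V(z(t)) → 0` gives the identity.
-/

open Matrix MeasureTheory

section CompletionOfSquare

variable {ι κ 𝕜 : Type*} [Fintype ι] [Fintype κ] [CommRing 𝕜]

theorem Matrix.mulVec_dotProduct_eq_dotProduct_transpose_mulVec (M : Matrix κ ι 𝕜)
    (x : ι → 𝕜) (y : κ → 𝕜) : M *ᵥ x ⬝ᵥ y = x ⬝ᵥ Mᵀ *ᵥ y := by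
  rw [dotProduct_comm, dotProduct_transpose_mulVec]

theorem Matrix.mulVec_dotProduct_comm_of_transpose_eq {X : Matrix ι ι 𝕜} (hX : Xᵀ = X)
    (x y : ι → 𝕜) : X *ᵥ x ⬝ᵥ y = X *ᵥ y ⬝ᵥ x := by
  rw [mulVec_dotProduct_eq_dotProduct_transpose_mulVec, hX, dotProduct_comm]

variable [DecidableEq κ]

theorem Matrix.mulVec_add_feedback_dotProduct {R : Matrix κ κ 𝕜} (hRsymm : Rᵀ = R)
    (hRdet : IsUnit R.det) (B : Matrix ι κ 𝕜) {X : Matrix ι ι 𝕜} (hX : Xᵀ = X)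
    (z : ι → 𝕜) (v : κ → 𝕜) :
    R *ᵥ (v + (R⁻¹ * Bᵀ * X) *ᵥ z) ⬝ᵥ (v + (R⁻¹ * Bᵀ * X) *ᵥ z)
      = R *ᵥ v ⬝ᵥ v + 2 * (X *ᵥ z ⬝ᵥ B *ᵥ v) + (X * B * R⁻¹ * Bᵀ * X) *ᵥ z ⬝ᵥ z := by
  have hRK : R * (R⁻¹ * Bᵀ * X) = Bᵀ * X := by
    rw [Matrix.mul_assoc, ← Matrix.mul_assoc R, mul_nonsing_inv R hRdet, Matrix.one_mul]
  have cross₁ : R *ᵥ v ⬝ᵥ (R⁻¹ * Bᵀ * X) *ᵥ z = X *ᵥ z ⬝ᵥ B *ᵥ v := by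
    rw [mulVec_dotProduct_eq_dotProduct_transpose_mulVec, hRsymm, mulVec_mulVec, hRK,
      ← mulVec_mulVec, dotProduct_transpose_mulVec, dotProduct_comm]
  have cross₂ : R *ᵥ (R⁻¹ * Bᵀ * X) *ᵥ z ⬝ᵥ v = X *ᵥ z ⬝ᵥ B *ᵥ v := by
    rw [mulVec_mulVec, hRK, ← mulVec_mulVec, mulVec_dotProduct_eq_dotProduct_transpose_mulVec,
      transpose_transpose]
  have square : R *ᵥ (R⁻¹ * Bᵀ * X) *ᵥ z ⬝ᵥ (R⁻¹ * Bᵀ * X) *ᵥ z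
      = (X * B * R⁻¹ * Bᵀ * X) *ᵥ z ⬝ᵥ z := by
    rw [mulVec_mulVec, hRK, mulVec_dotProduct_eq_dotProduct_transpose_mulVec, transpose_mul,
      hX, transpose_transpose, mulVec_mulVec, dotProduct_comm]
    simp only [Matrix.mul_assoc]
  simp only [mulVec_add, add_dotProduct, dotProduct_add]
  rw [cross₁, cross₂, square]
  ring

theorem Matrix.riccati_dissipation {A : Matrix ι ι 𝕜} {B : Matrix ι κ 𝕜} {Q : Matrix ι ι 𝕜}
    {R : Matrix κ κ 𝕜} (hRsymm : Rᵀ = R) (hRdet : IsUnit R.det) {X : Matrix ι ι 𝕜}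
    (hX : Xᵀ = X) (hARE : Aᵀ * X + X * A - X * B * R⁻¹ * Bᵀ * X = -Q)
    (z : ι → 𝕜) (v : κ → 𝕜) :
    X *ᵥ (A *ᵥ z + B *ᵥ v) ⬝ᵥ z + X *ᵥ z ⬝ᵥ (A *ᵥ z + B *ᵥ v)
      = R *ᵥ (v + (R⁻¹ * Bᵀ * X) *ᵥ z) ⬝ᵥ (v + (R⁻¹ * Bᵀ * X) *ᵥ z)
        - (Q *ᵥ z ⬝ᵥ z + R *ᵥ v ⬝ᵥ v) := by
  have hQform : Q *ᵥ z ⬝ᵥ z = (X * B * R⁻¹ * Bᵀ * X) *ᵥ z ⬝ᵥ z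
      - (X *ᵥ A *ᵥ z ⬝ᵥ z + X *ᵥ z ⬝ᵥ A *ᵥ z) := by
    rw [← neg_neg Q, ← hARE]
    simp only [neg_mulVec, sub_mulVec, add_mulVec, neg_dotProduct, sub_dotProduct,
      add_dotProduct, ← mulVec_mulVec, mulVec_dotProduct_eq_dotProduct_transpose_mulVec Aᵀ,
      transpose_transpose]
    ring
  rw [mulVec_add_feedback_dotProduct hRsymm hRdet B hX, hQform, mulVec_add, add_dotProduct,
    dotProduct_add, mulVec_dotProduct_comm_of_transpose_eq hX (B *ᵥ v)]
  ring

end CompletionOfSquare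

section Derivatives

variable {𝕜 ι κ : Type*} [NontriviallyNormedField 𝕜] [Fintype ι] {f g : 𝕜 → ι → 𝕜}
  {f' g' : ι → 𝕜} {t : 𝕜}

theorem HasDerivAt.dotProduct (hf : HasDerivAt f f' t) (hg : HasDerivAt g g' t) :
    HasDerivAt (fun s => f s ⬝ᵥ g s) (f' ⬝ᵥ g t + f t ⬝ᵥ g') t := by
  show HasDerivAt (fun s => ∑ i, f s i * g s i) (∑ i, f' i * g t i + ∑ i, f t i * g' i) t
  rw [← Finset.sum_add_distrib]
  exact HasDerivAt.fun_sum fun i _ => (hasDerivAt_pi.1 hf i).mul (hasDerivAt_pi.1 hg i)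

theorem HasDerivAt.matrix_mulVec (M : Matrix κ ι 𝕜) (hf : HasDerivAt f f' t) :
    HasDerivAt (fun s => M *ᵥ f s) (M *ᵥ f') t :=
  hasDerivAt_pi.2 fun i => by
    show HasDerivAt (fun s => ∑ j, M i j * f s j) (∑ j, M i j * f' j) t
    exact HasDerivAt.fun_sum fun j _ => (hasDerivAt_pi.1 hf j).const_mul (M i j)

theorem HasDerivAt.riccati_value {A : Matrix ι ι 𝕜} {B : Matrix ι κ 𝕜} {Q : Matrix ι ι 𝕜}
    [Fintype κ] [DecidableEq κ] {R : Matrix κ κ 𝕜} (hRsymm : Rᵀ = R) (hRdet : IsUnit R.det)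
    {X : Matrix ι ι 𝕜} (hX : Xᵀ = X) (hARE : Aᵀ * X + X * A - X * B * R⁻¹ * Bᵀ * X = -Q)
    {z : 𝕜 → ι → 𝕜} {v : 𝕜 → κ → 𝕜} (hz : HasDerivAt z (A *ᵥ z t + B *ᵥ v t) t) :
    HasDerivAt (fun s => X *ᵥ z s ⬝ᵥ z s)
      (R *ᵥ (v t + (R⁻¹ * Bᵀ * X) *ᵥ z t) ⬝ᵥ (v t + (R⁻¹ * Bᵀ * X) *ᵥ z t)
        - (Q *ᵥ z t ⬝ᵥ z t + R *ᵥ v t ⬝ᵥ v t)) t := by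
  simpa only [riccati_dissipation hRsymm hRdet hX hARE] using (hz.matrix_mulVec X).dotProduct hz

end Derivatives

theorem riccati_completion_of_square_forward_general
    (n m : ℕ)
    (A : Matrix (Fin n) (Fin n) ℝ) (B : Matrix (Fin n) (Fin m) ℝ)
    (Q : Matrix (Fin n) (Fin n) ℝ)
    (R : Matrix (Fin m) (Fin m) ℝ) (hR : R.PosDef)
    (X : Matrix (Fin n) (Fin n) ℝ) (hXsymm : Xᵀ = X)
    (hARE : Aᵀ * X + X * A - X * B * R⁻¹ * Bᵀ * X = -Q)
    (z : ℝ → Fin n → ℝ) (v : ℝ → Fin m → ℝ)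
    (hz : ∀ t ∈ Set.Ici (0 : ℝ),
      HasDerivWithinAt z (A.mulVec (z t) + B.mulVec (v t)) (Set.Ici 0) t)
    (hzlim : Filter.Tendsto z Filter.atTop (nhds 0))
    (hint1 : IntegrableOn
      (fun t => Q.mulVec (z t) ⬝ᵥ z t + R.mulVec (v t) ⬝ᵥ v t) (Set.Ici 0))
    (hint2 : IntegrableOn
      (fun t => R.mulVec (v t + (R⁻¹ * Bᵀ * X).mulVec (z t)) ⬝ᵥ
        (v t + (R⁻¹ * Bᵀ * X).mulVec (z t))) (Set.Ici 0)) :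
    (1 / 2) * ∫ t in Set.Ioi (0 : ℝ), (Q.mulVec (z t) ⬝ᵥ z t + R.mulVec (v t) ⬝ᵥ v t)
      = (1 / 2) * (X.mulVec (z 0) ⬝ᵥ z 0)
        + (1 / 2) * ∫ t in Set.Ioi (0 : ℝ),
            R.mulVec (v t + (R⁻¹ * Bᵀ * X).mulVec (z t)) ⬝ᵥ
              (v t + (R⁻¹ * Bᵀ * X).mulVec (z t)) := by
  have hRsymm : Rᵀ = R := hR.isHermitian.eq
  have hRdet : IsUnit R.det := (isUnit_iff_isUnit_det R).1 hR.isUnit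
  have hquad : Continuous fun w : Fin n → ℝ => X *ᵥ w ⬝ᵥ w :=
    (continuous_const.matrix_mulVec continuous_id).dotProduct continuous_id
  have hcont : ContinuousWithinAt (fun t => X *ᵥ z t ⬝ᵥ z t) (Set.Ici 0) 0 :=
    hquad.continuousAt.comp_continuousWithinAt (hz 0 Set.self_mem_Ici).continuousWithinAt
  have hderiv (t : ℝ) (ht : t ∈ Set.Ioi 0) := ((hz t (Set.mem_Ici.2 ht.le)).hasDerivAt
    (Ici_mem_nhds ht)).riccati_value hRsymm hRdet hXsymm hARE
  have hlim : Filter.Tendsto (fun t => X *ᵥ z t ⬝ᵥ z t) Filter.atTop (nhds 0) := by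
    simpa only [mulVec_zero, dotProduct_zero, Function.comp_def] using
      (hquad.tendsto 0).comp hzlim
  have hint1' := hint1.mono_set Set.Ioi_subset_Ici_self
  have hint2' := hint2.mono_set Set.Ioi_subset_Ici_self
  have hFTC := integral_Ioi_of_hasDerivAt_of_tendsto hcont hderiv (hint2'.sub hint1') hlim
  rw [integral_sub hint2' hint1'] at hFTC
  linarith

/-- completion-of-square identity for the forward dynamics and a symmetric
solution of the algebraic Riccati equation. -/
theorem riccati_completion_of_square_forward
    (n m : ℕ) (hn : 1 ≤ n) (hm : 1 ≤ m)
    (A : Matrix (Fin n) (Fin n) ℝ) (B : Matrix (Fin n) (Fin m) ℝ)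
    (Q : Matrix (Fin n) (Fin n) ℝ) (hQ : Q.PosDef)
    (R : Matrix (Fin m) (Fin m) ℝ) (hR : R.PosDef)
    (X : Matrix (Fin n) (Fin n) ℝ) (hXsymm : Xᵀ = X)
    (hARE : Aᵀ * X + X * A - X * B * R⁻¹ * Bᵀ * X = -Q)
    (z : ℝ → Fin n → ℝ) (v : ℝ → Fin m → ℝ)
    (hz : ∀ t ∈ Set.Ici (0 : ℝ),
      HasDerivWithinAt z (A.mulVec (z t) + B.mulVec (v t)) (Set.Ici 0) t)
    (hv : ContinuousOn v (Set.Ici 0))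
    (hzlim : Filter.Tendsto z Filter.atTop (nhds 0))
    (hint1 : IntegrableOn
      (fun t => Q.mulVec (z t) ⬝ᵥ z t + R.mulVec (v t) ⬝ᵥ v t) (Set.Ici 0))
    (hint2 : IntegrableOn
      (fun t => R.mulVec (v t + (R⁻¹ * Bᵀ * X).mulVec (z t)) ⬝ᵥ
        (v t + (R⁻¹ * Bᵀ * X).mulVec (z t))) (Set.Ici 0)) :
    (1 / 2) * ∫ t in Set.Ioi (0 : ℝ), (Q.mulVec (z t) ⬝ᵥ z t + R.mulVec (v t) ⬝ᵥ v t)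
      = (1 / 2) * (X.mulVec (z 0) ⬝ᵥ z 0)
        + (1 / 2) * ∫ t in Set.Ioi (0 : ℝ),
            R.mulVec (v t + (R⁻¹ * Bᵀ * X).mulVec (z t)) ⬝ᵥ
              (v t + (R⁻¹ * Bᵀ * X).mulVec (z t)) :=
  riccati_completion_of_square_forward_general n m A B Q R hR X hXsymm hARE z v hz hzlim hint1 hint2
end

section
/- Let (ȳ, ū, λ̄) be a KKT triple. Let z : [0, ∞) → ℝⁿ be differentiable and v : [0, ∞) → ℝᵐ be continuous with ż(t) = Az(t) + Bv(t) for all t ≥ 0 and z(t) → 0 as t → ∞. Then lim_{T→∞} ∫₀^T (⟨Q(ȳ − y_d), z(t)⟩ + ⟨R(ū − u_d), v(t)⟩) dt = −⟨λ̄, z(0)⟩. -/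
/-!
By the KKT conditions the integrand equals `⟨λ̄, A z(t) + B v(t)⟩ = d/dt ⟨λ̄, z(t)⟩`, so the
integral over `[0, T]` telescopes to `⟨λ̄, z(T)⟩ - ⟨λ̄, z(0)⟩`, which tends to `-⟨λ̄, z(0)⟩`.
-/

open Matrix MeasureTheory Filter Set Topology

theorem HasDerivWithinAt.const_dotProduct {𝕜 ι : Type*} [NontriviallyNormedField 𝕜] [Fintype ι]
    {z : 𝕜 → ι → 𝕜} {z' : ι → 𝕜} {s : Set 𝕜} {t : 𝕜}
    (c : ι → 𝕜) (h : HasDerivWithinAt z z' s t) :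
    HasDerivWithinAt (fun x => c ⬝ᵥ z x) (c ⬝ᵥ z') s t :=
  HasDerivWithinAt.fun_sum fun i _ => (hasDerivWithinAt_pi.1 h i).const_mul (c i)

theorem dotProduct_transpose_mulVec_add {R ι κ : Type*} [CommSemiring R] [Fintype ι] [Fintype κ]
    (A : Matrix ι ι R) (B : Matrix ι κ R) (c y : ι → R) (u : κ → R) :
    Aᵀ *ᵥ c ⬝ᵥ y + Bᵀ *ᵥ c ⬝ᵥ u = c ⬝ᵥ (A *ᵥ y + B *ᵥ u) := by
  simp only [mulVec_transpose, dotProduct_add, dotProduct_mulVec]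

theorem tendsto_intervalIntegral_of_hasDerivWithinAt_Ici {E : Type*} [NormedAddCommGroup E]
    [NormedSpace ℝ E] [CompleteSpace E] {φ f : ℝ → E} {a : ℝ} {L : E}
    (hderiv : ∀ t ∈ Ici a, HasDerivWithinAt φ (f t) (Ici a) t) (hf : ContinuousOn f (Ici a))
    (hφ : Tendsto φ atTop (𝓝 L)) :
    Tendsto (fun T => ∫ t in a..T, f t) atTop (𝓝 (L - φ a)) := by
  refine (hφ.sub_const (φ a)).congr' ?_
  filter_upwards [eventually_ge_atTop a] with T hT
  refine (intervalIntegral.integral_eq_sub_of_hasDeriv_right_of_le hT ?_ ?_ ?_).symm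
  · exact fun t ht => (hderiv t ht.1).continuousWithinAt.mono Icc_subset_Ici_self
  · exact fun t ht => (hderiv t (mem_Ici.2 ht.1.le)).mono (Ioi_subset_Ici ht.1.le)
  · exact (hf.mono (uIcc_of_le hT ▸ Icc_subset_Ici_self)).intervalIntegrable

theorem cross_term_limit_general
    (n m : ℕ)
    (A : Matrix (Fin n) (Fin n) ℝ) (B : Matrix (Fin n) (Fin m) ℝ)
    (Q : Matrix (Fin n) (Fin n) ℝ)
    (R : Matrix (Fin m) (Fin m) ℝ)
    (yd : Fin n → ℝ) (ud : Fin m → ℝ)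
    (ybar : Fin n → ℝ) (ubar : Fin m → ℝ) (lambdabar : Fin n → ℝ)
    (hKKT1 : Q.mulVec (ybar - yd) = Aᵀ.mulVec lambdabar)
    (hKKT2 : R.mulVec (ubar - ud) = Bᵀ.mulVec lambdabar)
    (z : ℝ → Fin n → ℝ) (v : ℝ → Fin m → ℝ)
    (hz : ∀ t ∈ Set.Ici (0 : ℝ),
      HasDerivWithinAt z (A.mulVec (z t) + B.mulVec (v t)) (Set.Ici 0) t)
    (hv : ContinuousOn v (Set.Ici 0))
    (hzlim : Filter.Tendsto z Filter.atTop (nhds 0)) :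
    Filter.Tendsto
      (fun T : ℝ => ∫ t in (0 : ℝ)..T,
        (Q.mulVec (ybar - yd) ⬝ᵥ z t + R.mulVec (ubar - ud) ⬝ᵥ v t))
      Filter.atTop (nhds (-(lambdabar ⬝ᵥ z 0))) := by
  have hdot {k : ℕ} (c : Fin k → ℝ) : Continuous fun w : Fin k → ℝ => c ⬝ᵥ w :=
    continuous_const.dotProduct continuous_id
  have hderiv : ∀ t ∈ Ici (0 : ℝ), HasDerivWithinAt (fun s => lambdabar ⬝ᵥ z s)
      (Q *ᵥ (ybar - yd) ⬝ᵥ z t + R *ᵥ (ubar - ud) ⬝ᵥ v t) (Ici 0) t := fun t ht => by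
    rw [hKKT1, hKKT2, dotProduct_transpose_mulVec_add]
    exact (hz t ht).const_dotProduct lambdabar
  have hzc : ContinuousOn z (Ici 0) := fun t ht => (hz t ht).continuousWithinAt
  have hcont : ContinuousOn (fun t => Q *ᵥ (ybar - yd) ⬝ᵥ z t + R *ᵥ (ubar - ud) ⬝ᵥ v t)
      (Ici 0) :=
    ((hdot _).comp_continuousOn hzc).add ((hdot _).comp_continuousOn hv)
  have hlim : Tendsto (fun s => lambdabar ⬝ᵥ z s) atTop (𝓝 0) :=
    ((hdot lambdabar).tendsto' 0 0 (dotProduct_zero _)).comp hzlim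
  simpa using tendsto_intervalIntegral_of_hasDerivWithinAt_Ici hderiv hcont hlim

/-- the limit of the linear cross term along a trajectory of the forward
control system converging to 0 equals `−⟨λ̄, z(0)⟩`. -/
theorem cross_term_limit
    (n m : ℕ) (hn : 1 ≤ n) (hm : 1 ≤ m)
    (A : Matrix (Fin n) (Fin n) ℝ) (B : Matrix (Fin n) (Fin m) ℝ)
    (Q : Matrix (Fin n) (Fin n) ℝ) (hQ : Q.PosDef)
    (R : Matrix (Fin m) (Fin m) ℝ) (hR : R.PosDef)
    (yd : Fin n → ℝ) (ud : Fin m → ℝ)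
    (ybar : Fin n → ℝ) (ubar : Fin m → ℝ) (lambdabar : Fin n → ℝ)
    (hfeas : A.mulVec ybar + B.mulVec ubar = 0)
    (hKKT1 : Q.mulVec (ybar - yd) = Aᵀ.mulVec lambdabar)
    (hKKT2 : R.mulVec (ubar - ud) = Bᵀ.mulVec lambdabar)
    (z : ℝ → Fin n → ℝ) (v : ℝ → Fin m → ℝ)
    (hz : ∀ t ∈ Set.Ici (0 : ℝ),
      HasDerivWithinAt z (A.mulVec (z t) + B.mulVec (v t)) (Set.Ici 0) t)
    (hv : ContinuousOn v (Set.Ici 0))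
    (hzlim : Filter.Tendsto z Filter.atTop (nhds 0)) :
    Filter.Tendsto
      (fun T : ℝ => ∫ t in (0 : ℝ)..T,
        (Q.mulVec (ybar - yd) ⬝ᵥ z t + R.mulVec (ubar - ud) ⬝ᵥ v t))
      Filter.atTop (nhds (-(lambdabar ⬝ᵥ z 0))) :=
  cross_term_limit_general n m A B Q R yd ud ybar ubar lambdabar hKKT1 hKKT2 z v hz hv hzlim
end

section
/- Let P and N be symmetric real n×n matrices, both solving the ARE, such that Δ = P − N is invertible. Set A₋ = A − BR⁻¹BᵀP and A₊ = A − BR⁻¹BᵀN, let M be the 2n×2n block matrix [[A, BR⁻¹Bᵀ], [Q, −Aᵀ]], and let T be the 2n×2n block matrix [[I, I], [−N, −P]]. Then T is invertible, its inverse is the block matrix [[Δ⁻¹P, Δ⁻¹], [−Δ⁻¹N, −Δ⁻¹]], and T⁻¹MT equals the block diagonal matrix [[A₊, 0], [0, A₋]]. -/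
/-!
Each solution `X` of the Riccati equation makes the graph `[I; -X]` an invariant subspace of the
Hamiltonian matrix `M`, on which `M` acts as the closed-loop matrix `A - B R⁻¹ Bᵀ X`. The columns
of `T` are the graphs of `N` and `P`, so `M T = T diag(A₊, A₋)`; and `T` is invertible because
subtracting its two block columns leaves `[0; P - N]`.
-/

open Matrix

namespace Matrix

variable {ι κ R : Type*} [Fintype ι] [Fintype κ]

theorem fromBlocks_hamiltonian_mul_fromRows_of_riccati [DecidableEq ι] [Ring R]
    {A G Q X : Matrix ι ι R} (hX : Aᵀ * X + X * A - X * G * X = -Q) :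
    fromBlocks A G Q (-Aᵀ) * fromRows (1 : Matrix ι ι R) (-X)
      = fromRows (1 : Matrix ι ι R) (-X) * (A - G * X) := by
  have hQ : Q = -(Aᵀ * X + X * A - X * G * X) := by rw [hX, neg_neg]
  rw [fromBlocks_mul_fromRows, fromRows_mul, hQ]
  congr 1 <;> noncomm_ring

theorem fromCols_mul_fromBlocks_zero [Semiring R] {m : Type*}
    (X : Matrix m ι R) (Y : Matrix m κ R) (D₁ : Matrix ι ι R) (D₂ : Matrix κ κ R) :
    fromCols X Y * fromBlocks D₁ 0 0 D₂ = fromCols (X * D₁) (Y * D₂) := by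
  simp only [fromCols_mul_fromBlocks, Matrix.mul_zero, add_zero, zero_add]

theorem fromBlocks_hamiltonian_mul_eq_mul_fromBlocks_diag_of_riccati [DecidableEq ι] [Ring R]
    {A G Q N P : Matrix ι ι R}
    (hN : Aᵀ * N + N * A - N * G * N = -Q) (hP : Aᵀ * P + P * A - P * G * P = -Q) :
    fromBlocks A G Q (-Aᵀ) * fromBlocks 1 1 (-N) (-P)
      = fromBlocks 1 1 (-N) (-P) * fromBlocks (A - G * N) 0 0 (A - G * P) := by
  rw [← fromCols_fromRows_eq_fromBlocks 1 1 (-N) (-P), mul_fromCols, fromCols_mul_fromBlocks_zero,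
    fromBlocks_hamiltonian_mul_fromRows_of_riccati hN,
    fromBlocks_hamiltonian_mul_fromRows_of_riccati hP]

theorem fromBlocks_mul_fromBlocks_one_one_neg_neg_eq_one [DecidableEq ι] [Ring R]
    {N P D : Matrix ι ι R} (hD : D * (P - N) = 1) :
    fromBlocks (D * P) D (-(D * N)) (-D) * fromBlocks 1 1 (-N) (-P) = 1 := by
  rw [fromBlocks_multiply, ← fromBlocks_one]
  congr 1 <;> simp only [Matrix.mul_one, Matrix.mul_neg, Matrix.neg_mul, neg_neg]
  · rw [← sub_eq_add_neg, ← Matrix.mul_sub, hD]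
  · rw [← sub_eq_add_neg, ← Matrix.mul_sub, sub_self, Matrix.mul_zero]
  · rw [neg_add_cancel]
  · rw [neg_add_eq_sub, ← Matrix.mul_sub, hD]

end Matrix

theorem block_diagonalization_general
    (n m : ℕ)
    (A : Matrix (Fin n) (Fin n) ℝ) (B : Matrix (Fin n) (Fin m) ℝ)
    (Q : Matrix (Fin n) (Fin n) ℝ)
    (R : Matrix (Fin m) (Fin m) ℝ)
    (P : Matrix (Fin n) (Fin n) ℝ)
    (hAREP : Aᵀ * P + P * A - P * B * R⁻¹ * Bᵀ * P = -Q)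
    (N : Matrix (Fin n) (Fin n) ℝ)
    (hAREN : Aᵀ * N + N * A - N * B * R⁻¹ * Bᵀ * N = -Q)
    (hΔ : IsUnit (P - N)) :
    IsUnit (Matrix.fromBlocks (1 : Matrix (Fin n) (Fin n) ℝ) 1 (-N) (-P)) ∧
    (Matrix.fromBlocks (1 : Matrix (Fin n) (Fin n) ℝ) 1 (-N) (-P))⁻¹
      = Matrix.fromBlocks ((P - N)⁻¹ * P) (P - N)⁻¹ (-((P - N)⁻¹ * N)) (-(P - N)⁻¹) ∧
    (Matrix.fromBlocks (1 : Matrix (Fin n) (Fin n) ℝ) 1 (-N) (-P))⁻¹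
        * Matrix.fromBlocks A (B * R⁻¹ * Bᵀ) Q (-Aᵀ)
        * Matrix.fromBlocks (1 : Matrix (Fin n) (Fin n) ℝ) 1 (-N) (-P)
      = Matrix.fromBlocks (A - B * R⁻¹ * Bᵀ * N) 0 0 (A - B * R⁻¹ * Bᵀ * P) := by
  have hST := fromBlocks_mul_fromBlocks_one_one_neg_neg_eq_one
    (nonsing_inv_mul _ ((isUnit_iff_isUnit_det _).mp hΔ))
  have hT := isUnit_det_of_left_inverse hST
  have hMT := fromBlocks_hamiltonian_mul_eq_mul_fromBlocks_diag_of_riccati (G := B * R⁻¹ * Bᵀ)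
    (by simpa only [Matrix.mul_assoc] using hAREN) (by simpa only [Matrix.mul_assoc] using hAREP)
  refine ⟨(isUnit_iff_isUnit_det _).mpr hT, inv_eq_left_inv hST, ?_⟩
  rw [Matrix.mul_assoc, hMT]
  exact nonsing_inv_mul_cancel_left _ _ hT

/-- block diagonalization of the extremal matrix `M` by the matrix
`T = [[I, I], [−N, −P]]`. -/
theorem block_diagonalization
    (n m : ℕ) (hn : 1 ≤ n) (hm : 1 ≤ m)
    (A : Matrix (Fin n) (Fin n) ℝ) (B : Matrix (Fin n) (Fin m) ℝ)
    (Q : Matrix (Fin n) (Fin n) ℝ) (hQ : Q.PosDef)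
    (R : Matrix (Fin m) (Fin m) ℝ) (hR : R.PosDef)
    (P : Matrix (Fin n) (Fin n) ℝ) (hPsymm : Pᵀ = P)
    (hAREP : Aᵀ * P + P * A - P * B * R⁻¹ * Bᵀ * P = -Q)
    (N : Matrix (Fin n) (Fin n) ℝ) (hNsymm : Nᵀ = N)
    (hAREN : Aᵀ * N + N * A - N * B * R⁻¹ * Bᵀ * N = -Q)
    (hΔ : IsUnit (P - N)) :
    IsUnit (Matrix.fromBlocks (1 : Matrix (Fin n) (Fin n) ℝ) 1 (-N) (-P)) ∧
    (Matrix.fromBlocks (1 : Matrix (Fin n) (Fin n) ℝ) 1 (-N) (-P))⁻¹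
      = Matrix.fromBlocks ((P - N)⁻¹ * P) (P - N)⁻¹ (-((P - N)⁻¹ * N)) (-(P - N)⁻¹) ∧
    (Matrix.fromBlocks (1 : Matrix (Fin n) (Fin n) ℝ) 1 (-N) (-P))⁻¹
        * Matrix.fromBlocks A (B * R⁻¹ * Bᵀ) Q (-Aᵀ)
        * Matrix.fromBlocks (1 : Matrix (Fin n) (Fin n) ℝ) 1 (-N) (-P)
      = Matrix.fromBlocks (A - B * R⁻¹ * Bᵀ * N) 0 0 (A - B * R⁻¹ * Bᵀ * P) :=
  block_diagonalization_general n m A B Q R P hAREP N hAREN hΔ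
end

section
/- Let P and N be symmetric real n×n matrices, both solving the ARE, such that Δ = P − N is invertible. Set A₋ = A − BR⁻¹BᵀP and A₊ = A − BR⁻¹BᵀN. Then the spectrum of A₋ (the set of eigenvalues of A₋ regarded as a complex matrix) equals the negative of the spectrum of A₊, i.e. σ(A₋) = {−z : z ∈ σ(A₊)}. -/
open Matrix

lemma spectrum_transpose_eq {n : ℕ} (M : Matrix (Fin n) (Fin n) ℂ) :
    spectrum ℂ Mᵀ = spectrum ℂ M := by
  ext z
  simp only [spectrum.mem_iff, Matrix.isUnit_iff_isUnit_det, not_iff_not]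
  have h : (algebraMap ℂ (Matrix (Fin n) (Fin n) ℂ) z - Mᵀ) =
      (algebraMap ℂ (Matrix (Fin n) (Fin n) ℂ) z - M)ᵀ := by
    rw [Matrix.transpose_sub]
    congr 1
    simp [Matrix.algebraMap_eq_diagonal, Matrix.diagonal_transpose]
  rw [h, Matrix.det_transpose]

/-- the spectrum of `A₋` (as a complex matrix) is the negative of the
spectrum of `A₊`. -/
theorem spectrum_negation
    (n m : ℕ) (hn : 1 ≤ n) (hm : 1 ≤ m)
    (A : Matrix (Fin n) (Fin n) ℝ) (B : Matrix (Fin n) (Fin m) ℝ)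
    (Q : Matrix (Fin n) (Fin n) ℝ) (hQ : Q.PosDef)
    (R : Matrix (Fin m) (Fin m) ℝ) (hR : R.PosDef)
    (P : Matrix (Fin n) (Fin n) ℝ) (hPsymm : Pᵀ = P)
    (hAREP : Aᵀ * P + P * A - P * B * R⁻¹ * Bᵀ * P = -Q)
    (N : Matrix (Fin n) (Fin n) ℝ) (hNsymm : Nᵀ = N)
    (hAREN : Aᵀ * N + N * A - N * B * R⁻¹ * Bᵀ * N = -Q)
    (hΔ : IsUnit (P - N)) :
    spectrum ℂ ((A - B * R⁻¹ * Bᵀ * P).map (algebraMap ℝ ℂ))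
      = (fun z : ℂ => -z) '' spectrum ℂ ((A - B * R⁻¹ * Bᵀ * N).map (algebraMap ℝ ℂ)) := by
  set S : Matrix (Fin n) (Fin n) ℝ := B * R⁻¹ * Bᵀ with hS
  have hRsymm : Rᵀ = R := by
    have := hR.isHermitian
    rwa [Matrix.IsHermitian, Matrix.conjTranspose_eq_transpose_of_trivial] at this
  have hSsymm : Sᵀ = S := by
    rw [hS, Matrix.transpose_mul, Matrix.transpose_mul, Matrix.transpose_transpose,
      Matrix.transpose_nonsing_inv, hRsymm, Matrix.mul_assoc]
  -- key algebraic identity over ℝ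
  have key : (P - N) * (A - S * P) = (-(A - S * N)ᵀ) * (P - N) := by
    have expand : (P - N) * (A - S * P) - (-(A - S * N)ᵀ) * (P - N)
        = (Aᵀ * P + P * A - P * S * P) - (Aᵀ * N + N * A - N * S * N) := by
      rw [Matrix.transpose_sub, Matrix.transpose_mul, hSsymm, hNsymm]
      noncomm_ring
    have hP' : Aᵀ * P + P * A - P * S * P = -Q := by
      rw [← hAREP, hS]; noncomm_ring; simp [Matrix.mul_assoc]
    have hN' : Aᵀ * N + N * A - N * S * N = -Q := by
      rw [← hAREN, hS]; noncomm_ring; simp [Matrix.mul_assoc]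
    have h0 : (P - N) * (A - S * P) - (-(A - S * N)ᵀ) * (P - N) = 0 := by
      rw [expand, hP', hN', sub_self]
    exact sub_eq_zero.mp h0
  -- move to ℂ via the ring hom
  set ψ : Matrix (Fin n) (Fin n) ℝ →+* Matrix (Fin n) (Fin n) ℂ :=
    (algebraMap ℝ ℂ).mapMatrix with hψ
  have keyℂ : ((P - N).map (algebraMap ℝ ℂ)) * ((A - S * P).map (algebraMap ℝ ℂ))
      = ((-(A - S * N)ᵀ).map (algebraMap ℝ ℂ)) * ((P - N).map (algebraMap ℝ ℂ)) := by
    have := congrArg ψ key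
    simpa only [_root_.map_mul, hψ, RingHom.mapMatrix_apply] using this
  have hΔℂ : IsUnit ((P - N).map (algebraMap ℝ ℂ)) := by
    have := hΔ.map ψ
    simpa only [hψ, RingHom.mapMatrix_apply] using this
  set u : (Matrix (Fin n) (Fin n) ℂ)ˣ := hΔℂ.unit with hu
  have hucoe : (u : Matrix (Fin n) (Fin n) ℂ) = (P - N).map (algebraMap ℝ ℂ) := hΔℂ.unit_spec
  have hconj : (A - S * P).map (algebraMap ℝ ℂ)
      = (↑u⁻¹ : Matrix (Fin n) (Fin n) ℂ) * (((-(A - S * N)ᵀ).map (algebraMap ℝ ℂ)) * (↑u : Matrix (Fin n) (Fin n) ℂ)) := by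
    rw [hucoe, ← keyℂ, ← Matrix.mul_assoc, ← hucoe, Units.inv_mul, Matrix.one_mul]
  rw [hconj]
  rw [← Matrix.mul_assoc]
  rw [spectrum.units_conjugate' (a := ((-(A - S * N)ᵀ).map (algebraMap ℝ ℂ)))]
  have hmapneg : ((-(A - S * N)ᵀ).map (algebraMap ℝ ℂ))
      = -(((A - S * N).map (algebraMap ℝ ℂ))ᵀ) := by
    rw [← Matrix.transpose_map]
    ext i j
    simp only [Matrix.map_apply, Matrix.neg_apply, Matrix.transpose_apply, _root_.map_neg]
  rw [hmapneg, ← spectrum.neg_eq, spectrum_transpose_eq]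
  ext z
  simp only [Set.mem_neg, Set.mem_image]
  constructor
  · intro h
    exact ⟨-z, h, neg_neg z⟩
  · rintro ⟨a, ha, rfl⟩
    simpa using ha
end

section
/- Let A₊, A₋ be real n×n matrices and M ≥ 1, ν > 0 with ‖exp(tA₋)‖ ≤ M e^{−νt} and ‖exp(−tA₊)‖ ≤ M e^{−νt} for all t ≥ 0. Let T > 0 satisfy M e^{−νT} ≤ 1 and M² e^{−2νT} ≤ 1/2. Then for all a, b ∈ ℝⁿ there exists a unique pair (w₀, v_T) ∈ ℝⁿ × ℝⁿ such that the functions w(t) = exp(tA₋) w₀ and v(t) = exp(−(T − t)A₊) v_T satisfy v(0) + w(0) = a and v(T) + w(T) = b; moreover ‖w₀ − (a − exp(−TA₊) b)‖ ≤ 2M² e^{−2νT} (‖a‖ + ‖b‖) and ‖v_T − (b − exp(TA₋) a)‖ ≤ 2M² e^{−2νT} (‖a‖ + ‖b‖). -/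
/-!
With `P = exp(−T A₊)` and `Q = exp(T A₋)` the boundary conditions read `P v + w = a`,
`v + Q w = b`. Eliminating `w = a − P v` leaves `(1 − Q P) v = b − Q a`, and `‖Q P‖ ≤ ½`, so
`1 − Q P` is invertible by the Neumann series. For the estimate, `w − (a − P b) = P Q w`, and
the same identity gives `‖w‖ ≤ 2 (‖a‖ + ‖b‖)`; the bound for `v` follows by symmetry.
-/

open Matrix

/-- The Euclidean norm of a vector of `ℝⁿ`. -/
noncomputable def enorm13 {n : ℕ} (x : Fin n → ℝ) : ℝ := Real.sqrt (x ⬝ᵥ x)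

section BoundaryPair

variable {𝕜 E : Type*} [NontriviallyNormedField 𝕜] [NormedAddCommGroup E] [NormedSpace 𝕜 E]
  {P Q : E →L[𝕜] E} {a b v w : E}

open ContinuousLinearMap

theorem one_sub_mul_apply_eq_of_boundary (h₁ : P v + w = a) (h₂ : v + Q w = b) :
    (1 - Q * P) v = b - Q a := by
  subst h₁ h₂
  simp only [_root_.sub_apply, one_apply_eq_self, mul_apply_eq_comp, map_add]
  abel

theorem sub_eq_mul_apply_of_boundary (h₁ : P v + w = a) (h₂ : v + Q w = b) :
    w - (a - P b) = (P * Q) w := by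
  subst h₁ h₂
  simp only [map_add, mul_apply_eq_comp]
  abel

theorem norm_sub_le_of_boundary {s : ℝ} (hP : ‖P‖ ≤ 1) (hPQ : ‖P * Q‖ ≤ s) (hs : s ≤ 1 / 2)
    (h₁ : P v + w = a) (h₂ : v + Q w = b) :
    ‖w - (a - P b)‖ ≤ 2 * s * (‖a‖ + ‖b‖) := by
  have hPQw : ‖(P * Q) w‖ ≤ s * ‖w‖ := (le_opNorm _ _).trans (by gcongr)
  have hPb : ‖P b‖ ≤ ‖b‖ := P.le_of_opNorm_le hP b |>.trans_eq (one_mul _)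
  have hw : ‖w‖ ≤ 2 * (‖a‖ + ‖b‖) := by
    have : ‖w‖ ≤ ‖a - P b‖ + ‖(P * Q) w‖ := by
      rw [← sub_eq_mul_apply_of_boundary h₁ h₂]
      exact norm_le_insert' _ _
    nlinarith [norm_sub_le a (P b), norm_nonneg w]
  calc ‖w - (a - P b)‖ = ‖(P * Q) w‖ := by rw [sub_eq_mul_apply_of_boundary h₁ h₂]
    _ ≤ s * ‖w‖ := hPQw
    _ ≤ s * (2 * (‖a‖ + ‖b‖)) := by gcongr; exact (norm_nonneg _).trans hPQ
    _ = 2 * s * (‖a‖ + ‖b‖) := by ring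

variable [CompleteSpace E]

theorem exists_boundary_pair_unique (hQP : ‖Q * P‖ < 1) (a b : E) :
    ∃ w v, (P v + w = a ∧ v + Q w = b) ∧
      ∀ w' v', P v' + w' = a → v' + Q w' = b → w' = w ∧ v' = v := by
  have hbij : Function.Bijective ⇑(1 - Q * P) :=
    isUnit_iff_bijective.mp (isUnit_one_sub_of_norm_lt_one hQP)
  obtain ⟨v, hv⟩ := hbij.2 (b - Q a)
  refine ⟨a - P v, v, ⟨by abel, ?_⟩, fun w' v' h₁ h₂ => ?_⟩
  · simp only [_root_.sub_apply, one_apply_eq_self, mul_apply_eq_comp] at hv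
    rw [map_sub]
    linear_combination (norm := module) hv
  · have hv' : v' = v := hbij.1 ((one_sub_mul_apply_eq_of_boundary h₁ h₂).trans hv.symm)
    subst hv'
    exact ⟨eq_sub_of_add_eq' h₁, rfl⟩

end BoundaryPair

theorem enorm13_eq_norm_toLp {n : ℕ} (x : Fin n → ℝ) : enorm13 x = ‖WithLp.toLp 2 x‖ := by
  rw [EuclideanSpace.norm_eq, enorm13, dotProduct]
  simp [sq]

theorem norm_toEuclideanCLM_le {n : ℕ} {A : Matrix (Fin n) (Fin n) ℝ} {c : ℝ} (hc : 0 ≤ c)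
    (h : ∀ x, enorm13 (A *ᵥ x) ≤ c * enorm13 x) : ‖toEuclideanCLM (𝕜 := ℝ) A‖ ≤ c :=
  ContinuousLinearMap.opNorm_le_bound _ hc fun x => by
    simpa [enorm13_eq_norm_toLp, ← toEuclideanCLM_toLp] using h (WithLp.ofLp x)

theorem boundary_pair_unique_general
    (n : ℕ)
    (Aplus Aminus : Matrix (Fin n) (Fin n) ℝ)
    (M ν : ℝ) (hM : 1 ≤ M)
    (hminus : ∀ t : ℝ, 0 ≤ t → ∀ x : Fin n → ℝ,
      enorm13 ((NormedSpace.exp (t • Aminus)).mulVec x)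
        ≤ M * Real.exp (-ν * t) * enorm13 x)
    (hplus : ∀ t : ℝ, 0 ≤ t → ∀ x : Fin n → ℝ,
      enorm13 ((NormedSpace.exp ((-t) • Aplus)).mulVec x)
        ≤ M * Real.exp (-ν * t) * enorm13 x)
    (T : ℝ) (hT : 0 < T)
    (hT1 : M * Real.exp (-ν * T) ≤ 1)
    (hT2 : M ^ 2 * Real.exp (-2 * ν * T) ≤ 1 / 2)
    (a b : Fin n → ℝ) :
    ∃ w₀ vT : Fin n → ℝ,
      ((NormedSpace.exp ((-T) • Aplus)).mulVec vT + w₀ = a ∧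
        vT + (NormedSpace.exp (T • Aminus)).mulVec w₀ = b) ∧
      (∀ w₀' vT' : Fin n → ℝ,
        (NormedSpace.exp ((-T) • Aplus)).mulVec vT' + w₀' = a →
        vT' + (NormedSpace.exp (T • Aminus)).mulVec w₀' = b →
        w₀' = w₀ ∧ vT' = vT) ∧
      enorm13 (w₀ - (a - (NormedSpace.exp ((-T) • Aplus)).mulVec b))
        ≤ 2 * M ^ 2 * Real.exp (-2 * ν * T) * (enorm13 a + enorm13 b) ∧
      enorm13 (vT - (b - (NormedSpace.exp (T • Aminus)).mulVec a))
        ≤ 2 * M ^ 2 * Real.exp (-2 * ν * T) * (enorm13 a + enorm13 b) := by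
  set r := M * Real.exp (-ν * T)
  have hr : 0 ≤ r := by positivity
  have hrs : r * r = M ^ 2 * Real.exp (-2 * ν * T) := by
    rw [mul_mul_mul_comm, ← Real.exp_add, ← sq]
    ring_nf
  set P := toEuclideanCLM (𝕜 := ℝ) (NormedSpace.exp ((-T) • Aplus))
  set Q := toEuclideanCLM (𝕜 := ℝ) (NormedSpace.exp (T • Aminus))
  have hP : ‖P‖ ≤ r := norm_toEuclideanCLM_le hr (hplus T hT.le)
  have hQ : ‖Q‖ ≤ r := norm_toEuclideanCLM_le hr (hminus T hT.le)
  have hPQ : ‖P * Q‖ ≤ M ^ 2 * Real.exp (-2 * ν * T) :=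
    hrs ▸ norm_mul_le_of_le hP hQ
  have hQP : ‖Q * P‖ ≤ M ^ 2 * Real.exp (-2 * ν * T) :=
    hrs ▸ norm_mul_le_of_le hQ hP
  obtain ⟨w, v, ⟨h₁, h₂⟩, huniq⟩ :=
    exists_boundary_pair_unique (hQP.trans_lt (by linarith)) (WithLp.toLp 2 a) (WithLp.toLp 2 b)
  refine ⟨WithLp.ofLp w, WithLp.ofLp v, ⟨?_, ?_⟩, fun w' v' h₁' h₂' => ?_, ?_, ?_⟩
  · simpa [P, ofLp_toEuclideanCLM] using congrArg WithLp.ofLp h₁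
  · simpa [Q, ofLp_toEuclideanCLM] using congrArg WithLp.ofLp h₂
  · obtain ⟨rfl, rfl⟩ := huniq (WithLp.toLp 2 w') (WithLp.toLp 2 v')
      (by simp [P, toEuclideanCLM_toLp, ← h₁']) (by simp [Q, toEuclideanCLM_toLp, ← h₂'])
    simp
  · simpa [enorm13_eq_norm_toLp, P, mul_assoc] using
      norm_sub_le_of_boundary (hP.trans hT1) hPQ hT2 h₁ h₂
  · rw [add_comm] at h₁ h₂
    simpa [enorm13_eq_norm_toLp, Q, mul_assoc, add_comm] using
      norm_sub_le_of_boundary (hQ.trans hT1) hQP hT2 h₂ h₁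

/-- unique solvability of the boundary conditions
`v(0) + w(0) = a`, `v(T) + w(T) = b` for `w(t) = exp(tA₋) w₀`, `v(t) = exp(−(T−t)A₊) v_T`,
with quantitative estimates on `(w₀, v_T)`. Matrix operator-norm bounds are expressed
through the action on vectors with the Euclidean norm. -/
theorem boundary_pair_unique
    (n : ℕ)
    (Aplus Aminus : Matrix (Fin n) (Fin n) ℝ)
    (M ν : ℝ) (hM : 1 ≤ M) (hν : 0 < ν)
    (hminus : ∀ t : ℝ, 0 ≤ t → ∀ x : Fin n → ℝ,
      enorm13 ((NormedSpace.exp (t • Aminus)).mulVec x)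
        ≤ M * Real.exp (-ν * t) * enorm13 x)
    (hplus : ∀ t : ℝ, 0 ≤ t → ∀ x : Fin n → ℝ,
      enorm13 ((NormedSpace.exp ((-t) • Aplus)).mulVec x)
        ≤ M * Real.exp (-ν * t) * enorm13 x)
    (T : ℝ) (hT : 0 < T)
    (hT1 : M * Real.exp (-ν * T) ≤ 1)
    (hT2 : M ^ 2 * Real.exp (-2 * ν * T) ≤ 1 / 2)
    (a b : Fin n → ℝ) :
    ∃ w₀ vT : Fin n → ℝ,
      ((NormedSpace.exp ((-T) • Aplus)).mulVec vT + w₀ = a ∧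
        vT + (NormedSpace.exp (T • Aminus)).mulVec w₀ = b) ∧
      (∀ w₀' vT' : Fin n → ℝ,
        (NormedSpace.exp ((-T) • Aplus)).mulVec vT' + w₀' = a →
        vT' + (NormedSpace.exp (T • Aminus)).mulVec w₀' = b →
        w₀' = w₀ ∧ vT' = vT) ∧
      enorm13 (w₀ - (a - (NormedSpace.exp ((-T) • Aplus)).mulVec b))
        ≤ 2 * M ^ 2 * Real.exp (-2 * ν * T) * (enorm13 a + enorm13 b) ∧
      enorm13 (vT - (b - (NormedSpace.exp (T • Aminus)).mulVec a))
        ≤ 2 * M ^ 2 * Real.exp (-2 * ν * T) * (enorm13 a + enorm13 b) :=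
  boundary_pair_unique_general n Aplus Aminus M ν hM hminus hplus T hT hT1 hT2 a b
end

section
/- Let P be a symmetric solution of the ARE, set A₋ = A − BR⁻¹BᵀP, and let E be a real n×n matrix satisfying the Lyapunov equation A₋E + EA₋ᵀ − BR⁻¹Bᵀ = 0. Let M be the 2n×2n block matrix [[A, BR⁻¹Bᵀ], [Q, −Aᵀ]] and let L be the 2n×2n block matrix [[I + EP, E], [P, I]]. Then L is invertible, its inverse is the block matrix [[I, −E], [−P, I + PE]], and LML⁻¹ equals the block diagonal matrix [[A₋, 0], [0, −A₋ᵀ]]. -/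
/-!
Factor `L = [[I + EP, E], [P, I]]` as `[[I, E], [0, I]] * [[I, 0], [P, I]]`. Conjugating the
Hamiltonian matrix `M` by the lower factor leaves `-(A - GP)ᵀ` (with `G = BR⁻¹Bᵀ` symmetric) as
the lower right block and, since the lower left block is the residual of the Riccati equation,
makes `M` block upper triangular. Conjugating by the upper factor then clears the upper right
block exactly when `E` solves the Sylvester (here Lyapunov) equation coupling the two diagonal
blocks.
-/

open Matrix

namespace Matrix

variable {l m α : Type*} [Fintype l] [Fintype m] [DecidableEq l] [DecidableEq m] [Ring α]

theorem fromBlocks_one_add_mul_eq_mul (E : Matrix l m α) (P : Matrix m l α) :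
    fromBlocks (1 + E * P) E P 1 = fromBlocks 1 E 0 1 * fromBlocks 1 0 P 1 := by
  simp [fromBlocks_multiply]

theorem fromBlocks_one_add_mul_mul_eq_one (E : Matrix l m α) (P : Matrix m l α) :
    fromBlocks (1 + E * P) E P 1 * fromBlocks 1 (-E) (-P) (1 + P * E) = 1 := by
  simp [fromBlocks_multiply, ← fromBlocks_one, Matrix.mul_add, Matrix.add_mul, Matrix.mul_assoc]

theorem fromBlocks_neg_mul_eq_mul (E : Matrix l m α) (P : Matrix m l α) :
    fromBlocks 1 (-E) (-P) (1 + P * E) = fromBlocks 1 0 (-P) 1 * fromBlocks 1 (-E) 0 1 := by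
  simpa [fromBlocks_multiply] using add_comm (1 : Matrix m m α) (P * E)

theorem fromBlocks_lower_conj_of_riccati {A : Matrix l l α} {G : Matrix l m α}
    {Q P : Matrix m l α} {D : Matrix m m α} (hP : P * A + Q - D * P - P * G * P = 0) :
    fromBlocks 1 0 P 1 * fromBlocks A G Q D * fromBlocks 1 0 (-P) 1
      = fromBlocks (A - G * P) G 0 (P * G + D) := by
  simpa [fromBlocks_multiply, Matrix.add_mul, Matrix.mul_assoc, sub_eq_add_neg, add_assoc] using hP

theorem fromBlocks_upper_conj_of_sylvester {X : Matrix l l α} {Y : Matrix m m α}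
    {G E : Matrix l m α} (hE : X * E - E * Y = G) :
    fromBlocks 1 E 0 1 * fromBlocks X G 0 Y * fromBlocks 1 (-E) 0 1 = fromBlocks X 0 0 Y := by
  subst hE
  simp [fromBlocks_multiply]

end Matrix

theorem block_diagonalization_semigroup_general
    (n m : ℕ)
    (A : Matrix (Fin n) (Fin n) ℝ) (B : Matrix (Fin n) (Fin m) ℝ)
    (Q : Matrix (Fin n) (Fin n) ℝ)
    (R : Matrix (Fin m) (Fin m) ℝ) (hR : R.PosDef)
    (P : Matrix (Fin n) (Fin n) ℝ) (hPsymm : Pᵀ = P)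
    (hARE : Aᵀ * P + P * A - P * B * R⁻¹ * Bᵀ * P = -Q)
    (E : Matrix (Fin n) (Fin n) ℝ)
    (hLyap : (A - B * R⁻¹ * Bᵀ * P) * E + E * (A - B * R⁻¹ * Bᵀ * P)ᵀ - B * R⁻¹ * Bᵀ = 0) :
    IsUnit (Matrix.fromBlocks (1 + E * P) E P (1 : Matrix (Fin n) (Fin n) ℝ)) ∧
    (Matrix.fromBlocks (1 + E * P) E P (1 : Matrix (Fin n) (Fin n) ℝ))⁻¹
      = Matrix.fromBlocks 1 (-E) (-P) (1 + P * E) ∧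
    Matrix.fromBlocks (1 + E * P) E P (1 : Matrix (Fin n) (Fin n) ℝ)
        * Matrix.fromBlocks A (B * R⁻¹ * Bᵀ) Q (-Aᵀ)
        * (Matrix.fromBlocks (1 + E * P) E P (1 : Matrix (Fin n) (Fin n) ℝ))⁻¹
      = Matrix.fromBlocks (A - B * R⁻¹ * Bᵀ * P) 0 0 (-(A - B * R⁻¹ * Bᵀ * P)ᵀ) := by
  set G := B * R⁻¹ * Bᵀ
  have hPG : P * B * R⁻¹ * Bᵀ * P = P * G * P := by simp only [G, Matrix.mul_assoc]
  have hRT : Rᵀ = R := (isHermitian_iff_isSymm.mp hR.isHermitian).eq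
  have hG : Gᵀ = G := by
    simp only [G, transpose_mul, transpose_transpose, transpose_nonsing_inv, hRT, Matrix.mul_assoc]
  have hT : (A - G * P)ᵀ = -(P * G + -Aᵀ) := by
    rw [transpose_sub, transpose_mul, hG, hPsymm]; abel
  rw [hT] at hLyap ⊢
  rw [hPG] at hARE
  have hinv := fromBlocks_one_add_mul_mul_eq_one E P
  refine ⟨.of_mul_eq_one _ hinv, inv_eq_right_inv hinv, ?_⟩
  have hRic : P * A + Q - -Aᵀ * P - P * G * P = 0 := by
    linear_combination (norm := noncomm_ring) hARE
  have hSyl : (A - G * P) * E - E * (P * G + -Aᵀ) = G := by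
    linear_combination (norm := noncomm_ring) hLyap
  rw [inv_eq_right_inv hinv, fromBlocks_one_add_mul_eq_mul, fromBlocks_neg_mul_eq_mul,
    neg_neg, ← fromBlocks_upper_conj_of_sylvester hSyl, ← fromBlocks_lower_conj_of_riccati hRic]
  simp only [Matrix.mul_assoc]

/-- block diagonalization of the extremal matrix `M` by
`L = [[I + EP, E], [P, I]]`, where `E` solves the Lyapunov equation. -/
theorem block_diagonalization_semigroup
    (n m : ℕ) (hn : 1 ≤ n) (hm : 1 ≤ m)
    (A : Matrix (Fin n) (Fin n) ℝ) (B : Matrix (Fin n) (Fin m) ℝ)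
    (Q : Matrix (Fin n) (Fin n) ℝ) (hQ : Q.PosDef)
    (R : Matrix (Fin m) (Fin m) ℝ) (hR : R.PosDef)
    (P : Matrix (Fin n) (Fin n) ℝ) (hPsymm : Pᵀ = P)
    (hARE : Aᵀ * P + P * A - P * B * R⁻¹ * Bᵀ * P = -Q)
    (E : Matrix (Fin n) (Fin n) ℝ)
    (hLyap : (A - B * R⁻¹ * Bᵀ * P) * E + E * (A - B * R⁻¹ * Bᵀ * P)ᵀ - B * R⁻¹ * Bᵀ = 0) :
    IsUnit (Matrix.fromBlocks (1 + E * P) E P (1 : Matrix (Fin n) (Fin n) ℝ)) ∧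
    (Matrix.fromBlocks (1 + E * P) E P (1 : Matrix (Fin n) (Fin n) ℝ))⁻¹
      = Matrix.fromBlocks 1 (-E) (-P) (1 + P * E) ∧
    Matrix.fromBlocks (1 + E * P) E P (1 : Matrix (Fin n) (Fin n) ℝ)
        * Matrix.fromBlocks A (B * R⁻¹ * Bᵀ) Q (-Aᵀ)
        * (Matrix.fromBlocks (1 + E * P) E P (1 : Matrix (Fin n) (Fin n) ℝ))⁻¹
      = Matrix.fromBlocks (A - B * R⁻¹ * Bᵀ * P) 0 0 (-(A - B * R⁻¹ * Bᵀ * P)ᵀ) :=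
  block_diagonalization_semigroup_general n m A B Q R hR P hPsymm hARE E hLyap
end

section
/- Let (ȳ, λ̄) ∈ ℝⁿ × ℝⁿ satisfy Aȳ + BR⁻¹Bᵀλ̄ = −B u_d and Qȳ − Aᵀλ̄ = Q y_d. Let P be a symmetric positive definite solution of the ARE and N a symmetric negative definite solution of the ARE; set A₋ = A − BR⁻¹BᵀP, A₊ = A − BR⁻¹BᵀN, and assume ‖exp(tA₋)‖ ≤ M e^{−νt} and ‖exp(−tA₊)‖ ≤ M e^{−νt} for all t ≥ 0, for some M ≥ 1, ν > 0. Then for all y₀, y₁ ∈ ℝⁿ there exist C > 0 and T₁ > 0 such that for every T ≥ T₁, every pair of differentiable functions (y, λ) : [0, T] → ℝⁿ × ℝⁿ solving ẏ = Ay + BR⁻¹Bᵀλ + B u_d, λ̇ = Qy − Aᵀλ − Q y_d with y(0) = y₀ and y(T) = y₁ satisfies, for every t ∈ [0, T], with w₀ = (y₀ − ȳ) − exp(−TA₊)(y₁ − ȳ) and v_T = (y₁ − ȳ) − exp(TA₋)(y₀ − ȳ): ‖y(t) − ȳ − exp(tA₋) w₀ − exp(−(T − t)A₊) v_T‖ ≤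 C e^{−2νT}(e^{−νt} + e^{−ν(T−t)}) and ‖λ(t) − λ̄ + P exp(tA₋) w₀ + N exp(−(T − t)A₊) v_T‖ ≤ C e^{−2νT}(e^{−νt} + e^{−ν(T−t)}). -/
open Matrix

/-- The Euclidean norm of a vector of `ℝⁿ`. -/
noncomputable def enorm18 {n : ℕ} (x : Fin n → ℝ) : ℝ := Real.sqrt (x ⬝ᵥ x)

/-! For two solutions `P`, `N` of the Riccati equation with `P - N` invertible, the
combinations `μ + P e` and `μ + N e` of the deviations `e = y - ȳ`, `μ = λ - λ̄` from the
equilibrium solve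
decoupled linear equations. After multiplication by `(P - N)⁻¹` and `(N - P)⁻¹` they become a
backward mode `e^{-(T-t)A₊} b` and a forward mode `e^{tA₋} a`, with
`e = e^{tA₋} a + e^{-(T-t)A₊} b` and `μ = -P e^{tA₋} a - N e^{-(T-t)A₊} b`.
The boundary conditions read `y₀ - ȳ = a + e^{-TA₊} b` and `y₁ - ȳ = e^{TA₋} a + b`. Once
`M e^{-νT} ≤ 1/2` they bound `‖a‖ + ‖b‖` by `2 (‖y₀ - ȳ‖ + ‖y₁ - ȳ‖)`, and substituting
them shows that the error of the expansion is
`e^{tA₋} e^{-TA₊} e^{TA₋} a + e^{-(T-t)A₊} e^{TA₋} e^{-TA₊} b`,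
each term carrying three exponential decay factors. -/

open Set Filter Topology

section Riccati

variable {α : Type*} [Ring α] {a a' s q x x₁ x₂ : α}

theorem riccati_sub_mul_self (h : a' * x + x * a - x * s * x = -q) :
    (x * s - a') * x = q + x * a := by
  rw [← neg_neg q, ← h]; noncomm_ring

theorem riccati_intertwine (h₁ : a' * x₁ + x₁ * a - x₁ * s * x₁ = -q)
    (h₂ : a' * x₂ + x₂ * a - x₂ * s * x₂ = -q) :
    (x₁ * s - a') * (x₁ - x₂) = (x₁ - x₂) * (a - s * x₂) := by
  rw [← sub_eq_zero]
  calc _ = -((a' * x₁ + x₁ * a - x₁ * s * x₁) - (a' * x₂ + x₂ * a - x₂ * s * x₂)) := by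
        noncomm_ring
    _ = 0 := by rw [h₁, h₂, sub_self, neg_zero]

end Riccati

theorem HasDerivWithinAt.const_mulVec {ι : Type*} [Fintype ι] (X : Matrix ι ι ℝ)
    {f : ℝ → ι → ℝ} {f' : ι → ℝ} {s : Set ℝ} {t : ℝ} (hf : HasDerivWithinAt f f' s t) :
    HasDerivWithinAt (fun t => X *ᵥ f t) (X *ᵥ f') s t :=
  (Matrix.mulVecLin X).toContinuousLinearMap.hasFDerivAt.comp_hasDerivWithinAt t hf

section MatrixODE

variable {ι : Type*} [Fintype ι] [DecidableEq ι]

theorem Matrix.hasDerivAt_exp_smul_mulVec (X : Matrix ι ι ℝ) (c : ι → ℝ) (t : ℝ) :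
    HasDerivAt (fun u : ℝ => NormedSpace.exp (u • X) *ᵥ c)
      (X *ᵥ (NormedSpace.exp (t • X) *ᵥ c)) t := by
  -- `Matrix` has no global norm; the ℓ∞ operator norm induces the product topology.
  let := Matrix.linftyOpNormedRing (n := ι) (α := ℝ)
  let := Matrix.linftyOpNormedAlgebra (n := ι) (R := ℝ) (α := ℝ)
  rw [mulVec_mulVec]
  exact ((Matrix.mulVecBilin ℝ ℝ).flip c).toContinuousLinearMap.hasFDerivAt.comp_hasDerivAt t
    (hasDerivAt_exp_smul_const' X t)

theorem Matrix.eq_exp_smul_mulVec_of_hasDerivWithinAt {X : Matrix ι ι ℝ} {f : ℝ → ι → ℝ}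
    {T : ℝ} (hf : ∀ t ∈ Icc 0 T, HasDerivWithinAt f (X *ᵥ f t) (Icc 0 T) t) :
    ∀ t ∈ Icc 0 T, f t = NormedSpace.exp (t • X) *ᵥ f 0 := by
  refine ODE_solution_unique (v := fun _ x => X *ᵥ x)
    (fun _ => (Matrix.mulVecLin X).toContinuousLinearMap.lipschitz)
    (fun t ht => (hf t ht).continuousWithinAt)
    (fun t ht => (hf t (Ico_subset_Icc_self ht)).mono_of_mem_nhdsWithin
      (Icc_mem_nhdsGE_of_mem ht))
    (fun t _ => (hasDerivAt_exp_smul_mulVec X (f 0) t).continuousAt.continuousWithinAt)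
    (fun t _ => (hasDerivAt_exp_smul_mulVec X (f 0) t).hasDerivWithinAt)
    (by simp)

end MatrixODE

theorem Matrix.inv_mul_eq_mul_inv_of_mul_eq_mul {ι K : Type*} [Fintype ι] [DecidableEq ι]
    [Field K] {D Y Z : Matrix ι ι K} (hD : IsUnit D) (h : Y * D = D * Z) :
    D⁻¹ * Y = Z * D⁻¹ := by
  have hD' : IsUnit D.det := (isUnit_iff_isUnit_det D).mp hD
  calc D⁻¹ * Y = D⁻¹ * (Y * D) * D⁻¹ := by
        rw [Matrix.mul_assoc, Matrix.mul_assoc Y, mul_nonsing_inv _ hD', Matrix.mul_one]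
    _ = Z * D⁻¹ := by
        rw [h, ← Matrix.mul_assoc, nonsing_inv_mul _ hD', Matrix.one_mul]

section Hamiltonian

variable {ι : Type*} [Fintype ι] {A S Q : Matrix ι ι ℝ}

theorem hasDerivWithinAt_sub_equilibrium {f g ybar lbar : ι → ℝ}
    (h₁ : A *ᵥ ybar + S *ᵥ lbar = -f) (h₂ : Q *ᵥ ybar - Aᵀ *ᵥ lbar = g)
    {y l : ℝ → ι → ℝ} {s : Set ℝ} {t : ℝ}
    (hy : HasDerivWithinAt y (A *ᵥ y t + S *ᵥ l t + f) s t)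
    (hl : HasDerivWithinAt l (Q *ᵥ y t - Aᵀ *ᵥ l t - g) s t) :
    HasDerivWithinAt (fun t => y t - ybar) (A *ᵥ (y t - ybar) + S *ᵥ (l t - lbar)) s t ∧
      HasDerivWithinAt (fun t => l t - lbar) (Q *ᵥ (y t - ybar) - Aᵀ *ᵥ (l t - lbar)) s t := by
  constructor
  · refine (hy.sub_const ybar).congr_deriv ?_
    rw [mulVec_sub, mulVec_sub, ← neg_neg f, ← h₁]
    abel
  · refine (hl.sub_const lbar).congr_deriv ?_
    rw [mulVec_sub, mulVec_sub, ← h₂]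
    abel

variable [DecidableEq ι] {X₁ X₂ : Matrix ι ι ℝ}

theorem hasDerivWithinAt_riccati_mode (h₁ : Aᵀ * X₁ + X₁ * A - X₁ * S * X₁ = -Q)
    (h₂ : Aᵀ * X₂ + X₂ * A - X₂ * S * X₂ = -Q) (hD : IsUnit (X₁ - X₂))
    {e μ : ℝ → ι → ℝ} {s : Set ℝ} {t : ℝ}
    (he : HasDerivWithinAt e (A *ᵥ e t + S *ᵥ μ t) s t)
    (hμ : HasDerivWithinAt μ (Q *ᵥ e t - Aᵀ *ᵥ μ t) s t) :
    HasDerivWithinAt (fun t => (X₁ - X₂)⁻¹ *ᵥ (μ t + X₁ *ᵥ e t))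
      ((A - S * X₂) *ᵥ ((X₁ - X₂)⁻¹ *ᵥ (μ t + X₁ *ᵥ e t))) s t := by
  refine ((hμ.add (he.const_mulVec X₁)).const_mulVec (X₁ - X₂)⁻¹).congr_deriv ?_
  have key : (X₁ * S - Aᵀ) *ᵥ (μ t + X₁ *ᵥ e t)
      = Q *ᵥ e t - Aᵀ *ᵥ μ t + X₁ *ᵥ (A *ᵥ e t + S *ᵥ μ t) := by
    rw [mulVec_add, mulVec_mulVec, riccati_sub_mul_self h₁]
    simp only [mulVec_add, add_mulVec, sub_mulVec, mulVec_mulVec]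
    abel
  rw [← key, mulVec_mulVec, mulVec_mulVec,
    inv_mul_eq_mul_inv_of_mul_eq_mul hD (riccati_intertwine h₁ h₂)]

theorem hamiltonian_mode_decomposition (hD : IsUnit (X₁ - X₂)) (e μ : ι → ℝ) :
    e = (X₂ - X₁)⁻¹ *ᵥ (μ + X₂ *ᵥ e) + (X₁ - X₂)⁻¹ *ᵥ (μ + X₁ *ᵥ e) ∧
      μ = -(X₁ *ᵥ ((X₂ - X₁)⁻¹ *ᵥ (μ + X₂ *ᵥ e))) - X₂ *ᵥ ((X₁ - X₂)⁻¹ *ᵥ (μ + X₁ *ᵥ e)) := by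
  set a := (X₂ - X₁)⁻¹ *ᵥ (μ + X₂ *ᵥ e)
  set b := (X₁ - X₂)⁻¹ *ᵥ (μ + X₁ *ᵥ e)
  have hD' : IsUnit (X₂ - X₁) := by simpa using hD.neg
  have ha : (X₁ - X₂) *ᵥ a = -(μ + X₂ *ᵥ e) := by
    rw [← neg_sub, neg_mulVec, mulVec_mulVec,
      mul_nonsing_inv _ ((isUnit_iff_isUnit_det _).mp hD'), one_mulVec]
  have hb : (X₁ - X₂) *ᵥ b = μ + X₁ *ᵥ e := by
    rw [mulVec_mulVec, mul_nonsing_inv _ ((isUnit_iff_isUnit_det _).mp hD), one_mulVec]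
  have hab : e = a + b := by
    refine mulVec_injective_iff_isUnit.mpr hD ?_
    rw [mulVec_add, ha, hb, sub_mulVec]
    abel
  refine ⟨hab, ?_⟩
  calc μ = (X₁ - X₂) *ᵥ b - X₁ *ᵥ e := by rw [hb]; abel
    _ = -(X₁ *ᵥ a) - X₂ *ᵥ b := by rw [hab, sub_mulVec, mulVec_add]; abel

theorem hamiltonian_eq_exp_modes {P N : Matrix ι ι ℝ}
    (hP : Aᵀ * P + P * A - P * S * P = -Q) (hN : Aᵀ * N + N * A - N * S * N = -Q)
    (hPN : IsUnit (P - N)) {e μ : ℝ → ι → ℝ} {T : ℝ}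
    (he : ∀ t ∈ Icc 0 T, HasDerivWithinAt e (A *ᵥ e t + S *ᵥ μ t) (Icc 0 T) t)
    (hμ : ∀ t ∈ Icc 0 T, HasDerivWithinAt μ (Q *ᵥ e t - Aᵀ *ᵥ μ t) (Icc 0 T) t) :
    ∃ a b : ι → ℝ, ∀ t ∈ Icc 0 T,
      e t = NormedSpace.exp (t • (A - S * P)) *ᵥ a
          + NormedSpace.exp ((-(T - t)) • (A - S * N)) *ᵥ b ∧
        μ t = -(P *ᵥ (NormedSpace.exp (t • (A - S * P)) *ᵥ a))
          - N *ᵥ (NormedSpace.exp ((-(T - t)) • (A - S * N)) *ᵥ b) := by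
  have hNP : IsUnit (N - P) := by simpa using hPN.neg
  have ha := eq_exp_smul_mulVec_of_hasDerivWithinAt fun t ht =>
    hasDerivWithinAt_riccati_mode hN hP hNP (he t ht) (hμ t ht)
  have hb := eq_exp_smul_mulVec_of_hasDerivWithinAt fun t ht =>
    hasDerivWithinAt_riccati_mode hP hN hPN (he t ht) (hμ t ht)
  refine ⟨(N - P)⁻¹ *ᵥ (μ 0 + N *ᵥ e 0),
    NormedSpace.exp (T • (A - S * N)) *ᵥ ((P - N)⁻¹ *ᵥ (μ 0 + P *ᵥ e 0)), fun t ht => ?_⟩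
  have hbt : NormedSpace.exp ((-(T - t)) • (A - S * N)) *ᵥ
      (NormedSpace.exp (T • (A - S * N)) *ᵥ ((P - N)⁻¹ *ᵥ (μ 0 + P *ᵥ e 0)))
      = (P - N)⁻¹ *ᵥ (μ t + P *ᵥ e t) := by
    rw [mulVec_mulVec, ← Matrix.exp_add_of_commute _ _
      ((Commute.refl _).smul_left _ |>.smul_right _), ← add_smul, neg_sub, sub_add_cancel,
      hb t ht]
  rw [hbt, ← ha t ht]
  exact hamiltonian_mode_decomposition hPN (e t) (μ t)

end Hamiltonian

section EuclideanNorm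

variable {n : ℕ}

theorem enorm18_eq_norm (x : Fin n → ℝ) : enorm18 x = ‖WithLp.toLp 2 x‖ := by
  simp [enorm18, EuclideanSpace.norm_eq, dotProduct, sq]

theorem enorm18_nonneg (x : Fin n → ℝ) : 0 ≤ enorm18 x := Real.sqrt_nonneg _

theorem enorm18_neg (x : Fin n → ℝ) : enorm18 (-x) = enorm18 x := by
  simp only [enorm18_eq_norm, WithLp.toLp_neg, norm_neg]

theorem enorm18_add_le (x y : Fin n → ℝ) : enorm18 (x + y) ≤ enorm18 x + enorm18 y := by
  simpa only [enorm18_eq_norm, WithLp.toLp_add] using norm_add_le _ _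

theorem enorm18_sub_le (x y : Fin n → ℝ) : enorm18 (x - y) ≤ enorm18 x + enorm18 y := by
  simpa only [enorm18_eq_norm, WithLp.toLp_sub] using norm_sub_le _ _

theorem exists_enorm18_mulVec_le (X : Matrix (Fin n) (Fin n) ℝ) :
    ∃ c, 0 ≤ c ∧ ∀ x, enorm18 (X *ᵥ x) ≤ c * enorm18 x :=
  ⟨‖toEuclideanCLM (𝕜 := ℝ) X‖, norm_nonneg _, fun x => by
    simpa only [enorm18_eq_norm, toEuclideanCLM_toLp] using
      (toEuclideanCLM (𝕜 := ℝ) X).le_opNorm (WithLp.toLp 2 x)⟩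

end EuclideanNorm

theorem exists_pos_forall_ge_mul_exp_neg_le (M : ℝ) {ν ε : ℝ} (hν : 0 < ν) (hε : 0 < ε) :
    ∃ T₁, 0 < T₁ ∧ ∀ T, T₁ ≤ T → M * Real.exp (-ν * T) ≤ ε := by
  have hlim : Tendsto (fun T => M * Real.exp (-ν * T)) atTop (𝓝 0) := by
    simpa using (Real.tendsto_exp_neg_atTop_nhds_zero.comp
      (tendsto_id.const_mul_atTop hν)).const_mul M
  obtain ⟨T₀, hT₀⟩ := eventually_atTop.mp (hlim.eventually (ge_mem_nhds hε))
  exact ⟨max T₀ 1, by positivity, fun T hT => hT₀ T (le_of_max_le_left hT)⟩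

section Expansion

variable {n : ℕ} {M ν : ℝ}

theorem enorm18_add_enorm18_le_of_boundary {U V : Matrix (Fin n) (Fin n) ℝ} {k : ℝ}
    (hU : ∀ x, enorm18 (U *ᵥ x) ≤ k * enorm18 x) (hV : ∀ x, enorm18 (V *ᵥ x) ≤ k * enorm18 x)
    (hk : k ≤ 1 / 2) (a b : Fin n → ℝ) :
    enorm18 a + enorm18 b ≤ 2 * (enorm18 (a + V *ᵥ b) + enorm18 (U *ᵥ a + b)) := by
  have ha := enorm18_sub_le (a + V *ᵥ b) (V *ᵥ b)
  have hb := enorm18_sub_le (U *ᵥ a + b) (U *ᵥ a)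
  rw [add_sub_cancel_right] at ha
  rw [add_sub_cancel_left] at hb
  nlinarith [hU a, hV b, enorm18_nonneg a, enorm18_nonneg b]

theorem enorm18_mulVec_mulVec_mulVec_le {X Y : ℝ → Matrix (Fin n) (Fin n) ℝ}
    (hX : ∀ s, 0 ≤ s → ∀ x, enorm18 (X s *ᵥ x) ≤ M * Real.exp (-ν * s) * enorm18 x)
    (hY : ∀ s, 0 ≤ s → ∀ x, enorm18 (Y s *ᵥ x) ≤ M * Real.exp (-ν * s) * enorm18 x)
    (hM : 0 ≤ M) {s T K : ℝ} (hs : 0 ≤ s) (hT : 0 ≤ T) {x : Fin n → ℝ}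
    (hx : enorm18 x ≤ K) :
    enorm18 (X s *ᵥ (Y T *ᵥ (X T *ᵥ x)))
      ≤ M ^ 3 * K * Real.exp (-2 * ν * T) * Real.exp (-ν * s) := by
  calc enorm18 (X s *ᵥ (Y T *ᵥ (X T *ᵥ x)))
      ≤ M * Real.exp (-ν * s) * enorm18 (Y T *ᵥ (X T *ᵥ x)) := hX s hs _
    _ ≤ M * Real.exp (-ν * s) * (M * Real.exp (-ν * T) * enorm18 (X T *ᵥ x)) := by
        gcongr; exact hY T hT _
    _ ≤ M * Real.exp (-ν * s) * (M * Real.exp (-ν * T) * (M * Real.exp (-ν * T) * K)) := by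
        gcongr; exact (hX T hT _).trans (by gcongr)
    _ = M ^ 3 * K * Real.exp (-2 * ν * T) * Real.exp (-ν * s) := by
        rw [show -2 * ν * T = -ν * T + -ν * T by ring, Real.exp_add]
        ring

theorem enorm18_add_enorm18_le_of_two_point {E F : ℝ → Matrix (Fin n) (Fin n) ℝ}
    (hE : ∀ s, 0 ≤ s → ∀ x, enorm18 (E s *ᵥ x) ≤ M * Real.exp (-ν * s) * enorm18 x)
    (hF : ∀ s, 0 ≤ s → ∀ x, enorm18 (F s *ᵥ x) ≤ M * Real.exp (-ν * s) * enorm18 x)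
    (hE0 : E 0 = 1) (hF0 : F 0 = 1) {T : ℝ} (hT : 0 ≤ T)
    (hsmall : M * Real.exp (-ν * T) ≤ 1 / 2) {e : ℝ → Fin n → ℝ} {a b : Fin n → ℝ}
    (he : ∀ t ∈ Icc 0 T, e t = E t *ᵥ a + F (T - t) *ᵥ b) :
    enorm18 a + enorm18 b ≤ 2 * (enorm18 (e 0) + enorm18 (e T)) := by
  have he0 : e 0 = a + F T *ᵥ b := by simpa [hE0] using he 0 ⟨le_rfl, hT⟩
  have heT : e T = E T *ᵥ a + b := by simpa [hF0] using he T ⟨hT, le_rfl⟩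
  rw [he0, heT]
  exact enorm18_add_enorm18_le_of_boundary (hE T hT) (hF T hT) hsmall a b

theorem enorm18_expansion_le {E F : ℝ → Matrix (Fin n) (Fin n) ℝ}
    (hE : ∀ s, 0 ≤ s → ∀ x, enorm18 (E s *ᵥ x) ≤ M * Real.exp (-ν * s) * enorm18 x)
    (hF : ∀ s, 0 ≤ s → ∀ x, enorm18 (F s *ᵥ x) ≤ M * Real.exp (-ν * s) * enorm18 x)
    (hM : 0 ≤ M) (hE0 : E 0 = 1) (hF0 : F 0 = 1) {T : ℝ} (hT : 0 ≤ T)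
    (hsmall : M * Real.exp (-ν * T) ≤ 1 / 2)
    {P N : Matrix (Fin n) (Fin n) ℝ} {cP cN : ℝ} (hcP0 : 0 ≤ cP)
    (hcP : ∀ x, enorm18 (P *ᵥ x) ≤ cP * enorm18 x) (hcN0 : 0 ≤ cN)
    (hcN : ∀ x, enorm18 (N *ᵥ x) ≤ cN * enorm18 x)
    {e μ : ℝ → Fin n → ℝ} {a b : Fin n → ℝ}
    (he : ∀ t ∈ Icc 0 T, e t = E t *ᵥ a + F (T - t) *ᵥ b)
    (hμ : ∀ t ∈ Icc 0 T, μ t = -(P *ᵥ (E t *ᵥ a)) - N *ᵥ (F (T - t) *ᵥ b))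
    {K : ℝ} (hK : 2 * (enorm18 (e 0) + enorm18 (e T)) ≤ K) :
    ∀ t ∈ Icc 0 T,
      enorm18 (e t - E t *ᵥ (e 0 - F T *ᵥ e T) - F (T - t) *ᵥ (e T - E T *ᵥ e 0))
          ≤ (1 + cP + cN) * M ^ 3 * K * Real.exp (-2 * ν * T)
            * (Real.exp (-ν * t) + Real.exp (-ν * (T - t))) ∧
        enorm18 (μ t + P *ᵥ (E t *ᵥ (e 0 - F T *ᵥ e T))
            + N *ᵥ (F (T - t) *ᵥ (e T - E T *ᵥ e 0)))
          ≤ (1 + cP + cN) * M ^ 3 * K * Real.exp (-2 * ν * T)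
            * (Real.exp (-ν * t) + Real.exp (-ν * (T - t))) := by
  intro t ht
  have he0 : e 0 = a + F T *ᵥ b := by simpa [hE0] using he 0 ⟨le_rfl, hT⟩
  have heT : e T = E T *ᵥ a + b := by simpa [hF0] using he T ⟨hT, le_rfl⟩
  have hab := (enorm18_add_enorm18_le_of_two_point hE hF hE0 hF0 hT hsmall he).trans hK
  have hK0 : 0 ≤ K := by linarith [enorm18_nonneg a, enorm18_nonneg b]
  set c := M ^ 3 * K * Real.exp (-2 * ν * T) with hc
  have hc0 : 0 ≤ c := by positivity
  set r₁ := E t *ᵥ (F T *ᵥ (E T *ᵥ a))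
  set r₂ := F (T - t) *ᵥ (E T *ᵥ (F T *ᵥ b))
  have hr₁ : enorm18 r₁ ≤ c * Real.exp (-ν * t) :=
    enorm18_mulVec_mulVec_mulVec_le hE hF hM ht.1 hT (by linarith [enorm18_nonneg b])
  have hr₂ : enorm18 r₂ ≤ c * Real.exp (-ν * (T - t)) :=
    enorm18_mulVec_mulVec_mulVec_le hF hE hM (sub_nonneg.2 ht.2) hT
      (by linarith [enorm18_nonneg a])
  have hr₁0 := enorm18_nonneg r₁
  have hr₂0 := enorm18_nonneg r₂
  constructor
  · have hy : e t - E t *ᵥ (e 0 - F T *ᵥ e T) - F (T - t) *ᵥ (e T - E T *ᵥ e 0)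
        = r₁ + r₂ := by
      rw [he t ht, he0, heT]
      simp only [mulVec_add, mulVec_sub]
      abel
    calc _ = enorm18 (r₁ + r₂) := by rw [hy]
      _ ≤ enorm18 r₁ + enorm18 r₂ := enorm18_add_le _ _
      _ ≤ (1 + cP + cN) * (c * Real.exp (-ν * t) + c * Real.exp (-ν * (T - t))) := by
        nlinarith
      _ = _ := by rw [hc]; ring
  · have hl : μ t + P *ᵥ (E t *ᵥ (e 0 - F T *ᵥ e T))
          + N *ᵥ (F (T - t) *ᵥ (e T - E T *ᵥ e 0)) = -(P *ᵥ r₁) - N *ᵥ r₂ := by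
      rw [hμ t ht, he0, heT]
      simp only [mulVec_add, mulVec_sub]
      abel
    calc _ = enorm18 (-(P *ᵥ r₁) - N *ᵥ r₂) := by rw [hl]
      _ ≤ enorm18 (P *ᵥ r₁) + enorm18 (N *ᵥ r₂) := by
        simpa only [enorm18_neg] using enorm18_sub_le (-(P *ᵥ r₁)) (N *ᵥ r₂)
      _ ≤ cP * enorm18 r₁ + cN * enorm18 r₂ := add_le_add (hcP r₁) (hcN r₂)
      _ ≤ (1 + cP + cN) * (c * Real.exp (-ν * t) + c * Real.exp (-ν * (T - t))) := by
        nlinarith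
      _ = _ := by rw [hc]; ring

end Expansion

theorem extremal_system_expansion_general
    (n m : ℕ)
    (A : Matrix (Fin n) (Fin n) ℝ) (B : Matrix (Fin n) (Fin m) ℝ)
    (Q : Matrix (Fin n) (Fin n) ℝ)
    (R : Matrix (Fin m) (Fin m) ℝ)
    (yd : Fin n → ℝ) (ud : Fin m → ℝ)
    (ybar lambdabar : Fin n → ℝ)
    (hstatic1 : A.mulVec ybar + (B * R⁻¹ * Bᵀ).mulVec lambdabar = -(B.mulVec ud))
    (hstatic2 : Q.mulVec ybar - Aᵀ.mulVec lambdabar = Q.mulVec yd)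
    (P : Matrix (Fin n) (Fin n) ℝ) (hP : P.PosDef)
    (hAREP : Aᵀ * P + P * A - P * B * R⁻¹ * Bᵀ * P = -Q)
    (N : Matrix (Fin n) (Fin n) ℝ) (hN : (-N).PosDef)
    (hAREN : Aᵀ * N + N * A - N * B * R⁻¹ * Bᵀ * N = -Q)
    (M ν : ℝ) (hM : 1 ≤ M) (hν : 0 < ν)
    (hstabP : ∀ t : ℝ, 0 ≤ t → ∀ x : Fin n → ℝ,
      enorm18 ((NormedSpace.exp (t • (A - B * R⁻¹ * Bᵀ * P))).mulVec x)
        ≤ M * Real.exp (-ν * t) * enorm18 x)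
    (hstabN : ∀ t : ℝ, 0 ≤ t → ∀ x : Fin n → ℝ,
      enorm18 ((NormedSpace.exp ((-t) • (A - B * R⁻¹ * Bᵀ * N))).mulVec x)
        ≤ M * Real.exp (-ν * t) * enorm18 x) :
    ∀ y₀ y₁ : Fin n → ℝ, ∃ C : ℝ, 0 < C ∧ ∃ T₁ : ℝ, 0 < T₁ ∧
      ∀ T : ℝ, T₁ ≤ T →
      ∀ y lam : ℝ → Fin n → ℝ,
        (∀ t ∈ Set.Icc (0 : ℝ) T,
          HasDerivWithinAt y
            (A.mulVec (y t) + (B * R⁻¹ * Bᵀ).mulVec (lam t) + B.mulVec ud)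
            (Set.Icc 0 T) t) →
        (∀ t ∈ Set.Icc (0 : ℝ) T,
          HasDerivWithinAt lam
            (Q.mulVec (y t) - Aᵀ.mulVec (lam t) - Q.mulVec yd)
            (Set.Icc 0 T) t) →
        y 0 = y₀ → y T = y₁ →
        ∀ t ∈ Set.Icc (0 : ℝ) T,
          enorm18 (y t - ybar
              - (NormedSpace.exp (t • (A - B * R⁻¹ * Bᵀ * P))).mulVec
                  ((y₀ - ybar) - (NormedSpace.exp ((-T) • (A - B * R⁻¹ * Bᵀ * N))).mulVec
                    (y₁ - ybar))
              - (NormedSpace.exp ((-(T - t)) • (A - B * R⁻¹ * Bᵀ * N))).mulVec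
                  ((y₁ - ybar) - (NormedSpace.exp (T • (A - B * R⁻¹ * Bᵀ * P))).mulVec
                    (y₀ - ybar)))
            ≤ C * Real.exp (-2 * ν * T) * (Real.exp (-ν * t) + Real.exp (-ν * (T - t))) ∧
          enorm18 (lam t - lambdabar
              + P.mulVec ((NormedSpace.exp (t • (A - B * R⁻¹ * Bᵀ * P))).mulVec
                  ((y₀ - ybar) - (NormedSpace.exp ((-T) • (A - B * R⁻¹ * Bᵀ * N))).mulVec
                    (y₁ - ybar)))
              + N.mulVec ((NormedSpace.exp ((-(T - t)) • (A - B * R⁻¹ * Bᵀ * N))).mulVec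
                  ((y₁ - ybar) - (NormedSpace.exp (T • (A - B * R⁻¹ * Bᵀ * P))).mulVec
                    (y₀ - ybar))))
            ≤ C * Real.exp (-2 * ν * T) * (Real.exp (-ν * t) + Real.exp (-ν * (T - t))) := by
  intro y₀ y₁
  obtain ⟨cP, hcP0, hcP⟩ := exists_enorm18_mulVec_le P
  obtain ⟨cN, hcN0, hcN⟩ := exists_enorm18_mulVec_le N
  obtain ⟨T₁, hT₁, hsmall⟩ := exists_pos_forall_ge_mul_exp_neg_le M hν one_half_pos
  have hd := add_nonneg (enorm18_nonneg (y₀ - ybar)) (enorm18_nonneg (y₁ - ybar))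
  refine ⟨(1 + cP + cN) * M ^ 3 * (2 * (enorm18 (y₀ - ybar) + enorm18 (y₁ - ybar)) + 1),
    by positivity, T₁, hT₁, ?_⟩
  intro T hT y lam hy hlam hy0 hyT
  have hshift := fun t ht =>
    hasDerivWithinAt_sub_equilibrium hstatic1 hstatic2 (hy t ht) (hlam t ht)
  obtain ⟨a, b, hrep⟩ := hamiltonian_eq_exp_modes (S := B * R⁻¹ * Bᵀ)
    (by simpa only [Matrix.mul_assoc] using hAREP) (by simpa only [Matrix.mul_assoc] using hAREN)
    (by simpa only [sub_eq_add_neg] using (hP.add hN).isUnit)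
    (fun t ht => (hshift t ht).1) (fun t ht => (hshift t ht).2)
  subst hy0 hyT
  exact enorm18_expansion_le hstabP hstabN (by linarith) (by simp) (by simp)
    (hT₁.le.trans hT) (hsmall T hT) hcP0 hcP hcN0 hcN
    (fun t ht => (hrep t ht).1) (fun t ht => (hrep t ht).2) (le_add_of_nonneg_right zero_le_one)

/-- expansion of the solutions of the extremal (Hamiltonian) system in the
scale `e^{TA₋}`, `e^{−TA₊}`: with `w₀ = (y₀−ȳ) − e^{−TA₊}(y₁−ȳ)` and
`v_T = (y₁−ȳ) − e^{TA₋}(y₀−ȳ)`, the solution `(y, λ)` of the extremal system with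
`y(0) = y₀`, `y(T) = y₁` satisfies the stated `O(e^{−2νT}(e^{−νt}+e^{−ν(T−t)}))` bounds. -/
theorem extremal_system_expansion
    (n m : ℕ) (hn : 1 ≤ n) (hm : 1 ≤ m)
    (A : Matrix (Fin n) (Fin n) ℝ) (B : Matrix (Fin n) (Fin m) ℝ)
    (Q : Matrix (Fin n) (Fin n) ℝ) (hQ : Q.PosDef)
    (R : Matrix (Fin m) (Fin m) ℝ) (hR : R.PosDef)
    (yd : Fin n → ℝ) (ud : Fin m → ℝ)
    (ybar lambdabar : Fin n → ℝ)
    (hstatic1 : A.mulVec ybar + (B * R⁻¹ * Bᵀ).mulVec lambdabar = -(B.mulVec ud))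
    (hstatic2 : Q.mulVec ybar - Aᵀ.mulVec lambdabar = Q.mulVec yd)
    (P : Matrix (Fin n) (Fin n) ℝ) (hP : P.PosDef)
    (hAREP : Aᵀ * P + P * A - P * B * R⁻¹ * Bᵀ * P = -Q)
    (N : Matrix (Fin n) (Fin n) ℝ) (hN : (-N).PosDef) (hNsymm : Nᵀ = N)
    (hAREN : Aᵀ * N + N * A - N * B * R⁻¹ * Bᵀ * N = -Q)
    (M ν : ℝ) (hM : 1 ≤ M) (hν : 0 < ν)
    (hstabP : ∀ t : ℝ, 0 ≤ t → ∀ x : Fin n → ℝ,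
      enorm18 ((NormedSpace.exp (t • (A - B * R⁻¹ * Bᵀ * P))).mulVec x)
        ≤ M * Real.exp (-ν * t) * enorm18 x)
    (hstabN : ∀ t : ℝ, 0 ≤ t → ∀ x : Fin n → ℝ,
      enorm18 ((NormedSpace.exp ((-t) • (A - B * R⁻¹ * Bᵀ * N))).mulVec x)
        ≤ M * Real.exp (-ν * t) * enorm18 x) :
    ∀ y₀ y₁ : Fin n → ℝ, ∃ C : ℝ, 0 < C ∧ ∃ T₁ : ℝ, 0 < T₁ ∧
      ∀ T : ℝ, T₁ ≤ T →
      ∀ y lam : ℝ → Fin n → ℝ,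
        (∀ t ∈ Set.Icc (0 : ℝ) T,
          HasDerivWithinAt y
            (A.mulVec (y t) + (B * R⁻¹ * Bᵀ).mulVec (lam t) + B.mulVec ud)
            (Set.Icc 0 T) t) →
        (∀ t ∈ Set.Icc (0 : ℝ) T,
          HasDerivWithinAt lam
            (Q.mulVec (y t) - Aᵀ.mulVec (lam t) - Q.mulVec yd)
            (Set.Icc 0 T) t) →
        y 0 = y₀ → y T = y₁ →
        ∀ t ∈ Set.Icc (0 : ℝ) T,
          enorm18 (y t - ybar
              - (NormedSpace.exp (t • (A - B * R⁻¹ * Bᵀ * P))).mulVec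
                  ((y₀ - ybar) - (NormedSpace.exp ((-T) • (A - B * R⁻¹ * Bᵀ * N))).mulVec
                    (y₁ - ybar))
              - (NormedSpace.exp ((-(T - t)) • (A - B * R⁻¹ * Bᵀ * N))).mulVec
                  ((y₁ - ybar) - (NormedSpace.exp (T • (A - B * R⁻¹ * Bᵀ * P))).mulVec
                    (y₀ - ybar)))
            ≤ C * Real.exp (-2 * ν * T) * (Real.exp (-ν * t) + Real.exp (-ν * (T - t))) ∧
          enorm18 (lam t - lambdabar
              + P.mulVec ((NormedSpace.exp (t • (A - B * R⁻¹ * Bᵀ * P))).mulVec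
                  ((y₀ - ybar) - (NormedSpace.exp ((-T) • (A - B * R⁻¹ * Bᵀ * N))).mulVec
                    (y₁ - ybar)))
              + N.mulVec ((NormedSpace.exp ((-(T - t)) • (A - B * R⁻¹ * Bᵀ * N))).mulVec
                  ((y₁ - ybar) - (NormedSpace.exp (T • (A - B * R⁻¹ * Bᵀ * P))).mulVec
                    (y₀ - ybar))))
            ≤ C * Real.exp (-2 * ν * T) * (Real.exp (-ν * t) + Real.exp (-ν * (T - t))) :=
  extremal_system_expansion_general n m A B Q R yd ud ybar lambdabar hstatic1 hstatic2 P hP hAREP N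
    hN hAREN M ν hM hν hstabP hstabN
end
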